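/- arXiv:2504.19052 — 2 statements merged into one kernel-verified Lean document; each statement's English description precedes it below -/
import Mathlib

section
/- For every integer k ≥ 2, P_{k+2}^{(k)} = F_{2k+3} - 1, where F denotes the Fibonacci sequence. -/
/-!
Subtracting the recurrence at `n - 1` from the one at `n` telescopes the two window sums into
`P n = 3 P (n - 1) - P (n - 2) - P (n - 1 - k)` for `n ≥ 3`. For `3 ≤ n ≤ k + 1` the last term
lies in `[2 - k, 0]` and vanishes, leaving the recurrence `F (m + 4) = 3 F (m + 2) - F m` of the
odd-indexed Fibonacci numbers; as `P 1 = F 1` and `P 2 = F 3`, this gives `P n = F (2 n - 1)` for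
`n ≤ k + 1`. At `n = k + 2` the last term is `P 1 = 1`, whence `P (k + 2) = F (2 k + 3) - 1`.
-/

open Finset

lemma Nat.fib_add_four_add_fib (n : ℕ) : fib (n + 4) + fib n = 3 * fib (n + 2) := by
  have h2 : fib (n + 2) = fib n + fib (n + 1) := fib_add_two
  have h3 : fib (n + 3) = fib (n + 1) + fib (n + 2) := fib_add_two
  have h4 : fib (n + 4) = fib (n + 2) + fib (n + 3) := fib_add_two
  omega

section kPell

variable {k : ℕ} {P : ℤ → ℤ}

lemma kPell_eq_three_mul_sub (hk : 2 ≤ k)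
    (hPrec : ∀ n : ℤ, 2 ≤ n → P n = 2 * P (n - 1) + ∑ i ∈ Icc (2 : ℕ) k, P (n - i))
    {n : ℤ} (hn : 3 ≤ n) :
    P n = 3 * P (n - 1) - P (n - 2) - P (n - 1 - k) := by
  have hwindow :
      ∑ i ∈ Icc (2 : ℕ) k, (P (n - 1 - i) - P (n - i)) = P (n - 1 - k) - P (n - 2) := by
    convert sum_Icc_sub hk (fun i : ℕ => P (n - i)) using 2 with i <;> push_cast <;> ring_nf
  have hprev := hPrec (n - 1) (by omega)
  rw [sub_sub n 1 1, one_add_one_eq_two] at hprev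
  rw [sum_sub_distrib] at hwindow
  linarith [hPrec n (by omega)]

lemma kPell_two (hP0 : ∀ n : ℤ, 2 - (k : ℤ) ≤ n → n ≤ 0 → P n = 0) (hP1 : P 1 = 1)
    (hPrec : ∀ n : ℤ, 2 ≤ n → P n = 2 * P (n - 1) + ∑ i ∈ Icc (2 : ℕ) k, P (n - i)) :
    P 2 = 2 := by
  have hwindow : ∑ i ∈ Icc (2 : ℕ) k, P (2 - i) = 0 :=
    sum_eq_zero fun i hi => hP0 _ (by grind) (by grind)
  rw [hPrec 2 le_rfl, hwindow]
  norm_num [hP1]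

lemma kPell_eq_fib (hk : 2 ≤ k) (hP0 : ∀ n : ℤ, 2 - (k : ℤ) ≤ n → n ≤ 0 → P n = 0)
    (hP1 : P 1 = 1)
    (hPrec : ∀ n : ℤ, 2 ≤ n → P n = 2 * P (n - 1) + ∑ i ∈ Icc (2 : ℕ) k, P (n - i)) :
    ∀ m ≤ k, P (m + 1) = Nat.fib (2 * m + 1) := by
  intro m
  induction m using Nat.twoStepInduction with
  | zero => simpa using hP1
  | one => exact fun _ => by simpa [Nat.fib_add_two] using kPell_two hP0 hP1 hPrec
  | more m ih₀ ih₁ =>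
    intro hm
    have hrec := kPell_eq_three_mul_sub hk hPrec (n := m + 3) (by omega)
    rw [hP0 (m + 3 - 1 - k) (by omega) (by omega), sub_zero,
      show (m : ℤ) + 3 - 1 = (m + 1 : ℕ) + 1 by push_cast; ring, ih₁ (by omega),
      show (m : ℤ) + 3 - 2 = m + 1 by ring, ih₀ (by omega)] at hrec
    have hfib := Nat.fib_add_four_add_fib (2 * m + 1)
    rw [show 2 * m + 1 + 4 = 2 * (m + 2) + 1 by ring,
      show 2 * m + 1 + 2 = 2 * (m + 1) + 1 by ring] at hfib
    push_cast
    rw [show (m : ℤ) + 2 + 1 = m + 3 by ring, hrec]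
    omega

end kPell

/-- For every integer k ≥ 2, P_{k+2}^{(k)} = F_{2k+3} - 1. -/
theorem kPell_kAddTwo (k : ℕ) (hk : 2 ≤ k) (P : ℤ → ℤ)
    (hP0 : ∀ n : ℤ, 2 - (k : ℤ) ≤ n → n ≤ 0 → P n = 0)
    (hP1 : P 1 = 1)
    (hPrec : ∀ n : ℤ, 2 ≤ n → P n = 2 * P (n - 1) + ∑ i ∈ Finset.Icc (2 : ℕ) k, P (n - i)) :
    P ((k : ℤ) + 2) = (Nat.fib (2 * k + 3) : ℤ) - 1 := by
  have hrec := kPell_eq_three_mul_sub hk hPrec (n := k + 2) (by omega)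
  rw [show (k : ℤ) + 2 - 1 - k = 1 by ring, hP1,
    show (k : ℤ) + 2 - 1 = k + 1 by ring, kPell_eq_fib hk hP0 hP1 hPrec k le_rfl,
    show (k : ℤ) + 2 - 2 = (k - 1 : ℕ) + 1 by omega,
    kPell_eq_fib hk hP0 hP1 hPrec (k - 1) (by omega)] at hrec
  have hfib := Nat.fib_add_four_add_fib (2 * (k - 1) + 1)
  rw [show 2 * (k - 1) + 1 + 4 = 2 * k + 3 by omega,
    show 2 * (k - 1) + 1 + 2 = 2 * k + 1 by omega] at hfib
  omega
end

section
/- Let k ≥ 2, α the dominant root of the k-Pell characteristic polynomial, and n a positive integer with n < φ^{k/2}. Then |α^n - φ^{2n}| < φ^{2n}/φ^{k/2-2}. -/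
/-!
Multiplying the characteristic equation by `α - 1` turns it into `α^(k-1) (α² - 3α + 1) = -1`.
Since `α² - 3α + 1 = (α - φ²)(α - ψ²)` and `α ≥ 2` gives `α - ψ² ≥ 2 - ψ² = φ`, this forces
`0 < φ² - α ≤ φ^(-k)`. The mean value bound `|α^n - φ^(2n)| ≤ n φ^(2n) (φ² - α)` and `n < φ^(k/2)` give
`|α^n - φ^(2n)| < φ^(2n - k/2)`.
-/

open Real goldenRatio Finset

lemma pow_mul_sq_sub_three_mul_add_one_eq_neg_one {R : Type*} [CommRing R] {x : R} {m : ℕ}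
    (h : x ^ (m + 1) - 2 * x ^ m - ∑ i ∈ range m, x ^ i = 0) :
    x ^ m * (x ^ 2 - 3 * x + 1) = -1 := by
  linear_combination (x - 1) * h + geom_sum_mul x m

lemma sq_sub_three_mul_add_one_eq (x : ℝ) : x ^ 2 - 3 * x + 1 = (x - φ ^ 2) * (x - ψ ^ 2) := by
  rw [goldenRatio_sq, goldenConj_sq]
  linear_combination (1 - x) * goldenRatio_add_goldenConj - goldenRatio_mul_goldenConj

lemma two_le_of_pow_mul_eq_neg_one {x : ℝ} {m : ℕ} (hx : 1 < x)
    (h : x ^ m * (x ^ 2 - 3 * x + 1) = -1) : 2 ≤ x := by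
  by_contra! hx2
  have hq : x ^ 2 - 3 * x + 1 < -1 := by nlinarith
  have hxm : 1 ≤ x ^ m := one_le_pow₀ hx.le
  nlinarith

lemma pow_mul_goldenRatio_sq_sub_mul_sub_goldenConj_sq_eq_one {x : ℝ} {m : ℕ}
    (h : x ^ m * (x ^ 2 - 3 * x + 1) = -1) : x ^ m * (φ ^ 2 - x) * (x - ψ ^ 2) = 1 := by
  rw [sq_sub_three_mul_add_one_eq] at h
  linear_combination -h

lemma goldenRatio_le_sub_goldenConj_sq {x : ℝ} (hx : 2 ≤ x) : φ ≤ x - ψ ^ 2 := by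
  rw [goldenConj_sq, ← one_sub_goldenConj]
  linarith

lemma lt_goldenRatio_sq_of_pow_mul_eq_neg_one {x : ℝ} {m : ℕ} (hx : 1 < x)
    (h : x ^ m * (x ^ 2 - 3 * x + 1) = -1) : x < φ ^ 2 := by
  have hψ := goldenRatio_le_sub_goldenConj_sq (two_le_of_pow_mul_eq_neg_one hx h)
  have hprod := pow_mul_goldenRatio_sq_sub_mul_sub_goldenConj_sq_eq_one h
  have hpos : 0 < x ^ m * (x - ψ ^ 2) :=
    mul_pos (pow_pos (zero_lt_one.trans hx) m) (goldenRatio_pos.trans_le hψ)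
  nlinarith

lemma goldenRatio_sq_sub_le_inv_pow_of_pow_mul_eq_neg_one {x : ℝ} {m : ℕ} (hx : 1 < x)
    (h : x ^ m * (x ^ 2 - 3 * x + 1) = -1) : φ ^ 2 - x ≤ (φ ^ (m + 1))⁻¹ := by
  have hx2 := two_le_of_pow_mul_eq_neg_one hx h
  have hgap : 0 ≤ φ ^ 2 - x := sub_nonneg.2 (lt_goldenRatio_sq_of_pow_mul_eq_neg_one hx h).le
  rw [← one_div, le_div_iff₀ (pow_pos goldenRatio_pos _),
    ← pow_mul_goldenRatio_sq_sub_mul_sub_goldenConj_sq_eq_one h, pow_succ]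
  have hφm : φ ^ m ≤ x ^ m :=
    pow_le_pow_left₀ goldenRatio_pos.le (by linarith [goldenRatio_lt_two]) m
  calc (φ ^ 2 - x) * (φ ^ m * φ) = φ ^ m * (φ ^ 2 - x) * φ := by ring
    _ ≤ x ^ m * (φ ^ 2 - x) * (x - ψ ^ 2) := by
      gcongr
      exact goldenRatio_le_sub_goldenConj_sq hx2

lemma abs_pow_sub_pow_le_sub_mul_pow {R : Type*} [CommRing R] [LinearOrder R]
    [IsStrictOrderedRing R] {a b : R} (ha : 0 ≤ a) (hab : a ≤ b) (hb : 1 ≤ b) (n : ℕ) :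
    |a ^ n - b ^ n| ≤ (b - a) * n * b ^ n := by
  have hmax : max |a| |b| = b := by
    rw [abs_of_nonneg ha, abs_of_nonneg (ha.trans hab), max_eq_right hab]
  calc |a ^ n - b ^ n| ≤ |a - b| * n * max |a| |b| ^ (n - 1) := abs_pow_sub_pow_le a b n
    _ ≤ (b - a) * n * b ^ n := by
      rw [hmax, abs_sub_comm, abs_of_nonneg (sub_nonneg.2 hab)]
      gcongr
      exact n.sub_le 1

lemma inv_pow_mul_rpow_half_le {b : ℝ} (hb : 1 ≤ b) (k : ℕ) :
    (b ^ k)⁻¹ * b ^ ((k : ℝ) / 2) ≤ (b ^ ((k : ℝ) / 2 - 2))⁻¹ := by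
  have hb0 : 0 ≤ b := zero_le_one.trans hb
  rw [← rpow_natCast, ← rpow_neg hb0, ← rpow_add (zero_lt_one.trans_le hb), ← rpow_neg hb0]
  exact rpow_le_rpow_of_exponent_le hb (by linarith)

theorem kPell_alpha_pow_approx_general (k : ℕ) (α : ℝ) (hα1 : 1 < α)
    (hroot : α ^ k - 2 * α ^ (k - 1) - ∑ i ∈ Finset.range (k - 1), α ^ i = 0)
    (n : ℕ)
    (hsmall : (n : ℝ) < ((1 + Real.sqrt 5) / 2) ^ ((k : ℝ) / 2)) :
    |α ^ n - ((1 + Real.sqrt 5) / 2) ^ (2 * n)| <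
      ((1 + Real.sqrt 5) / 2) ^ (2 * n) /
        ((1 + Real.sqrt 5) / 2) ^ ((k : ℝ) / 2 - 2) := by
  change (n : ℝ) < φ ^ ((k : ℝ) / 2) at hsmall
  change |α ^ n - φ ^ (2 * n)| < φ ^ (2 * n) / φ ^ ((k : ℝ) / 2 - 2)
  obtain ⟨m, rfl⟩ : ∃ m, k = m + 1 :=
    Nat.exists_eq_add_one_of_ne_zero (by rintro rfl; norm_num at hroot)
  have hchar : α ^ m * (α ^ 2 - 3 * α + 1) = -1 :=
    pow_mul_sq_sub_three_mul_add_one_eq_neg_one (by simpa using hroot)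
  have hlt := lt_goldenRatio_sq_of_pow_mul_eq_neg_one hα1 hchar
  have hgap := goldenRatio_sq_sub_le_inv_pow_of_pow_mul_eq_neg_one hα1 hchar
  have hφ2 : 1 ≤ φ ^ 2 := one_le_pow₀ one_lt_goldenRatio.le
  rw [pow_mul, div_eq_mul_inv]
  calc |α ^ n - (φ ^ 2) ^ n| ≤ (φ ^ 2 - α) * n * (φ ^ 2) ^ n :=
        abs_pow_sub_pow_le_sub_mul_pow (by positivity) hlt.le hφ2 n
    _ < (φ ^ (m + 1))⁻¹ * φ ^ (((m + 1 : ℕ) : ℝ) / 2) * (φ ^ 2) ^ n := by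
      have := goldenRatio_pos
      refine mul_lt_mul_of_pos_right ?_ (by positivity)
      calc (φ ^ 2 - α) * n ≤ (φ ^ (m + 1))⁻¹ * n := by gcongr
        _ < (φ ^ (m + 1))⁻¹ * φ ^ (((m + 1 : ℕ) : ℝ) / 2) := by gcongr
    _ ≤ (φ ^ 2) ^ n * (φ ^ (((m + 1 : ℕ) : ℝ) / 2 - 2))⁻¹ := by
      rw [mul_comm _ ((φ ^ 2) ^ n)]
      gcongr
      exact inv_pow_mul_rpow_half_le one_lt_goldenRatio.le (m + 1)

open Real in
/-- If n < φ^{k/2}, then |α^n - φ^{2n}| < φ^{2n}/φ^{k/2-2}. -/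
theorem kPell_alpha_pow_approx (k : ℕ) (hk : 2 ≤ k) (α : ℝ) (hα1 : 1 < α)
    (hroot : α ^ k - 2 * α ^ (k - 1) - ∑ i ∈ Finset.range (k - 1), α ^ i = 0)
    (n : ℕ) (hn : 0 < n)
    (hsmall : (n : ℝ) < ((1 + Real.sqrt 5) / 2) ^ ((k : ℝ) / 2)) :
    |α ^ n - ((1 + Real.sqrt 5) / 2) ^ (2 * n)| <
      ((1 + Real.sqrt 5) / 2) ^ (2 * n) /
        ((1 + Real.sqrt 5) / 2) ^ ((k : ℝ) / 2 - 2) :=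
  kPell_alpha_pow_approx_general k α hα1 hroot n hsmall
end
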